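/- Let F ⊂ ℝⁿ be a nonempty closed bounded convex set with 0 in its interior, a ∈ ℝⁿ, μ > 0. Define φ(x) = ρ_F(x - a) and φ_μ(x) = sup{⟨x - a, u⟩ - (μ/2)‖u‖² : u ∈ F°}. Then φ_μ(x) = (1/(2μ))‖x - a‖² - (μ/2)[d((x-a)/μ; F°)]², φ_μ is differentiable with ∇φ_μ(x) = P((x-a)/μ; F°), and φ_μ(x) ≤ φ(x) ≤ φ_μ(x) + (μ/2)‖F°‖², where ‖F°‖ = sup{‖u‖ : u ∈ F°}. -/

import Mathlib

noncomputable section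

/-- `ℝⁿ`. -/
abbrev E (n : ℕ) := EuclideanSpace ℝ (Fin n)

/-- Polar set `F° = {y : ⟨x, y⟩ ≤ 1 for all x ∈ F}`. -/
def polarSet {n : ℕ} (F : Set (E n)) : Set (E n) :=
  {y | ∀ x ∈ F, (inner ℝ x y : ℝ) ≤ 1}

/-- `p` is the Euclidean projection of `x` onto `K`. -/
def IsProjection {n : ℕ} (K : Set (E n)) (x p : E n) : Prop :=
  p ∈ K ∧ ∀ w ∈ K, ‖x - p‖ ≤ ‖x - w‖

/-!
Completing the square, `⟪z, u⟫ - μ/2 ‖u‖² = ‖z‖²/(2μ) - μ/2 ‖z/μ - u‖²`, so the supremum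
defining `φ_μ` is attained at the projection `p` of `(x - a)/μ` onto `F°`; this gives the distance
formula. Testing the suprema at `x` and at `y` with each other's maximizers sandwiches
`φ_μ y - φ_μ x - ⟪p, y - x⟫` between `0` and `‖y - x‖²/μ`, because projection onto a convex set
is nonexpansive; hence the gradient. The bounds against `φ` come from
`ρ_F(z) = sup_{u ∈ F°} ⟪z, u⟫`: `≥` is immediate from the definition of the gauge, and `≤` is the
bipolar inclusion `F°° ⊆ F`, a consequence of Hahn–Banach separation.
-/

open Metric Set Filter Asymptotics

section Polar

variable {n : ℕ} {F : Set (E n)}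

lemma zero_mem_polarSet (F : Set (E n)) : (0 : E n) ∈ polarSet F := by
  intro x _
  simp

lemma convex_polarSet (F : Set (E n)) : Convex ℝ (polarSet F) := by
  intro y hy z hz s t hs ht hst x hx
  rw [inner_add_right, real_inner_smul_right, real_inner_smul_right]
  nlinarith [hy x hx, hz x hx]

lemma isClosed_polarSet (F : Set (E n)) : IsClosed (polarSet F) := by
  have : polarSet F = ⋂ x ∈ F, {y : E n | (inner ℝ x y : ℝ) ≤ 1} := by
    ext y; simp [polarSet]
  rw [this]
  exact isClosed_biInter fun x _ => isClosed_le (continuous_const.inner continuous_id)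
    continuous_const

lemma isBounded_polarSet (h0 : (0 : E n) ∈ interior F) : Bornology.IsBounded (polarSet F) := by
  obtain ⟨ε, hε, hball⟩ := Metric.mem_nhds_iff.1 (mem_interior_iff_mem_nhds.1 h0)
  refine isBounded_iff_forall_norm_le.2 ⟨2 / ε, fun u hu => ?_⟩
  rcases eq_or_ne u 0 with rfl | hu0
  · simp only [norm_zero]; positivity
  have hun : 0 < ‖u‖ := norm_pos_iff.2 hu0
  -- test `u` against the point of norm `ε / 2` in its own direction
  have hx : (ε / 2 / ‖u‖) • u ∈ F := by
    apply hball
    rw [mem_ball_zero_iff, norm_smul, Real.norm_of_nonneg (by positivity),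
      div_mul_cancel₀ _ hun.ne']
    linarith
  have := hu _ hx
  rw [real_inner_smul_left, real_inner_self_eq_norm_sq, div_mul_eq_mul_div,
    div_le_iff₀ hun] at this
  rw [le_div_iff₀ hε]
  nlinarith

lemma isCompact_polarSet (h0 : (0 : E n) ∈ interior F) : IsCompact (polarSet F) :=
  isCompact_iff_isClosed_bounded.2 ⟨isClosed_polarSet F, isBounded_polarSet h0⟩

lemma inner_le_gauge_of_mem_polarSet (h0 : (0 : E n) ∈ interior F) {u : E n}
    (hu : u ∈ polarSet F) (z : E n) : (inner ℝ z u : ℝ) ≤ gauge F z := by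
  have habs : Absorbent ℝ F := absorbent_nhds_zero (mem_interior_iff_mem_nhds.1 h0)
  refine le_of_forall_gt_imp_ge_of_dense fun t ht => ?_
  obtain ⟨r, hr0, hrt, y, hy, rfl⟩ := exists_lt_of_gauge_lt habs ht
  rw [real_inner_smul_left]
  nlinarith [hu y hy]

/-- The bipolar theorem, in the direction that needs separation. -/
lemma polarSet_polarSet_subset (hcl : IsClosed F) (hcv : Convex ℝ F) (h0 : (0 : E n) ∈ F) :
    polarSet (polarSet F) ⊆ F := by
  intro y hy
  by_contra hyF
  obtain ⟨f, t, hFt, hty⟩ := geometric_hahn_banach_closed_point hcv hcl hyF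
  obtain ⟨v, rfl⟩ := (InnerProductSpace.toDual ℝ (E n)).surjective f
  simp only [InnerProductSpace.toDual_apply_apply] at hFt hty
  have ht : 0 < t := by simpa using hFt 0 h0
  have hv : t⁻¹ • v ∈ polarSet F := by
    intro x hx
    rw [real_inner_smul_right, real_inner_comm, inv_mul_le_one₀ ht]
    exact (hFt x hx).le
  have := hy _ hv
  rw [real_inner_smul_left, inv_mul_le_one₀ ht] at this
  linarith

lemma gauge_le_of_forall_inner_le (hcl : IsClosed F) (hcv : Convex ℝ F) (h0 : (0 : E n) ∈ F)
    {z : E n} {c : ℝ} (hz : ∀ u ∈ polarSet F, (inner ℝ z u : ℝ) ≤ c) : gauge F z ≤ c := by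
  refine le_of_forall_gt_imp_ge_of_dense fun r hr => ?_
  have hr0 : 0 < r := by simpa using (hz 0 (zero_mem_polarSet F)).trans_lt hr
  refine gauge_le_of_mem hr0.le ((mem_smul_set_iff_inv_smul_mem₀ hr0.ne' F z).2 ?_)
  refine polarSet_polarSet_subset hcl hcv h0 fun u hu => ?_
  rw [real_inner_smul_right, real_inner_comm, inv_mul_le_one₀ hr0]
  exact (hz u hu).trans hr.le

end Polar

section Projection

variable {n : ℕ} {K : Set (E n)}

lemma exists_isProjection (hK : IsClosed K) (hne : K.Nonempty) (y : E n) :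
    ∃ p, IsProjection K y p := by
  obtain ⟨p, hp, hdist⟩ := hK.exists_infDist_eq_dist hne y
  refine ⟨p, hp, fun w hw => ?_⟩
  rw [← dist_eq_norm, ← dist_eq_norm, ← hdist]
  exact infDist_le_dist_of_mem hw

lemma IsProjection.infDist_eq {y p : E n} (h : IsProjection K y p) :
    infDist y K = ‖y - p‖ := by
  have : Nonempty K := ⟨⟨p, h.1⟩⟩
  refine le_antisymm ?_ ?_
  · simpa [dist_eq_norm] using infDist_le_dist_of_mem h.1
  · rw [infDist_eq_iInf]
    exact le_ciInf fun w => by simpa [dist_eq_norm] using h.2 w w.2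

lemma IsProjection.inner_sub_nonpos (hK : Convex ℝ K) {y p : E n} (h : IsProjection K y p) :
    ∀ w ∈ K, (inner ℝ (y - p) (w - p) : ℝ) ≤ 0 := by
  have : Nonempty K := ⟨⟨p, h.1⟩⟩
  have hbdd : BddBelow (range fun w : K => ‖y - w‖) :=
    ⟨0, by rintro _ ⟨w, rfl⟩; exact norm_nonneg _⟩
  exact (norm_eq_iInf_iff_real_inner_le_zero hK h.1).1
    (le_antisymm (le_ciInf fun w => h.2 w w.2) (ciInf_le hbdd ⟨p, h.1⟩))

lemma IsProjection.norm_sub_le (hK : Convex ℝ K) {y₁ y₂ p₁ p₂ : E n}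
    (h₁ : IsProjection K y₁ p₁) (h₂ : IsProjection K y₂ p₂) : ‖p₁ - p₂‖ ≤ ‖y₁ - y₂‖ := by
  have A := h₁.inner_sub_nonpos hK p₂ h₂.1
  have B := h₂.inner_sub_nonpos hK p₁ h₁.1
  -- adding the two variational inequalities gives `‖p₁ - p₂‖² ≤ ⟪y₁ - y₂, p₁ - p₂⟫`
  have key : ‖p₁ - p₂‖ ^ 2 ≤ (inner ℝ (y₁ - y₂) (p₁ - p₂) : ℝ) := by
    have : (inner ℝ (y₁ - y₂) (p₁ - p₂) : ℝ) - ‖p₁ - p₂‖ ^ 2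
        = -(inner ℝ (y₁ - p₁) (p₂ - p₁) : ℝ) - (inner ℝ (y₂ - p₂) (p₁ - p₂) : ℝ) := by
      rw [← real_inner_self_eq_norm_sq, ← inner_sub_left,
        show y₁ - y₂ - (p₁ - p₂) = (y₁ - p₁) - (y₂ - p₂) by abel, inner_sub_left,
        ← neg_sub p₂ p₁, inner_neg_right]
    linarith
  nlinarith [real_inner_le_norm (y₁ - y₂) (p₁ - p₂), norm_nonneg (p₁ - p₂),
    norm_nonneg (y₁ - y₂)]

end Projection

section Smoothing

variable {V : Type*} [NormedAddCommGroup V] [InnerProductSpace ℝ V] {K : Set V} {μ : ℝ}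

/-- The paper's `φ_μ` is `nesterovSmoothing F° μ (· - a)`. -/
def nesterovSmoothing (K : Set V) (μ : ℝ) (z : V) : ℝ :=
  sSup ((fun u => (inner ℝ z u : ℝ) - μ / 2 * ‖u‖ ^ 2) '' K)

lemma inner_sub_mul_norm_sq_eq (hμ : 0 < μ) (z u : V) :
    (inner ℝ z u : ℝ) - μ / 2 * ‖u‖ ^ 2
      = 1 / (2 * μ) * ‖z‖ ^ 2 - μ / 2 * ‖(1 / μ) • z - u‖ ^ 2 := by
  rw [norm_sub_sq_real, norm_smul, real_inner_smul_left,
    Real.norm_of_nonneg (by positivity : (0 : ℝ) ≤ 1 / μ)]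
  field_simp
  ring

lemma le_nesterovSmoothing (hμ : 0 < μ) {u : V} (hu : u ∈ K) (z : V) :
    (inner ℝ z u : ℝ) - μ / 2 * ‖u‖ ^ 2 ≤ nesterovSmoothing K μ z := by
  refine le_csSup ⟨1 / (2 * μ) * ‖z‖ ^ 2, ?_⟩ ⟨u, hu, rfl⟩
  rintro _ ⟨w, -, rfl⟩
  dsimp only
  rw [inner_sub_mul_norm_sq_eq hμ]
  nlinarith

lemma nesterovSmoothing_le (hne : K.Nonempty) {z : V} {c : ℝ}
    (h : ∀ u ∈ K, (inner ℝ z u : ℝ) - μ / 2 * ‖u‖ ^ 2 ≤ c) : nesterovSmoothing K μ z ≤ c :=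
  csSup_le (hne.image _) (forall_mem_image.2 h)

lemma HasGradientAt.comp_sub_const [CompleteSpace V] {f : V → ℝ} {g x : V} (a : V)
    (h : HasGradientAt f g (x - a)) : HasGradientAt (fun y => f (y - a)) g x := by
  rw [hasGradientAt_iff_isLittleO_nhds_zero] at h ⊢
  simpa [sub_add_eq_add_sub] using h

lemma hasGradientAt_of_abs_le_mul_norm_sq [CompleteSpace V] {f : V → ℝ} {g x : V} (C : ℝ)
    (h : ∀ y, |f y - f x - inner ℝ g (y - x)| ≤ C * ‖y - x‖ ^ 2) : HasGradientAt f g x := by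
  rw [hasGradientAt_iff_isLittleO]
  have hsq : (fun y => ‖y - x‖ ^ 2) =o[nhds x] fun y => y - x :=
    (isLittleO_norm_pow_id one_lt_two).comp_tendsto (tendsto_sub_nhds_zero_iff.2 tendsto_id)
  refine (IsBigO.of_bound C (Eventually.of_forall fun y => ?_)).trans_isLittleO hsq
  simpa using h y

end Smoothing

section SmoothingProjection

variable {n : ℕ} {K : Set (E n)} {μ : ℝ}

lemma IsProjection.nesterovSmoothing_eq (hμ : 0 < μ) {z p : E n}
    (hp : IsProjection K ((1 / μ) • z) p) :
    nesterovSmoothing K μ z = (inner ℝ z p : ℝ) - μ / 2 * ‖p‖ ^ 2 := by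
  refine le_antisymm (nesterovSmoothing_le ⟨p, hp.1⟩ fun u hu => ?_)
    (le_nesterovSmoothing hμ hp.1 z)
  rw [inner_sub_mul_norm_sq_eq hμ, inner_sub_mul_norm_sq_eq hμ]
  have := pow_le_pow_left₀ (norm_nonneg _) (hp.2 u hu) 2
  nlinarith

lemma nesterovSmoothing_eq_sub_infDist (hμ : 0 < μ) (hK : IsClosed K) (hne : K.Nonempty)
    (z : E n) : nesterovSmoothing K μ z
      = 1 / (2 * μ) * ‖z‖ ^ 2 - μ / 2 * infDist ((1 / μ) • z) K ^ 2 := by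
  obtain ⟨p, hp⟩ := exists_isProjection hK hne ((1 / μ) • z)
  rw [hp.nesterovSmoothing_eq hμ, hp.infDist_eq, inner_sub_mul_norm_sq_eq hμ]

lemma IsProjection.abs_nesterovSmoothing_sub_le (hμ : 0 < μ) (hK : IsClosed K)
    (hcv : Convex ℝ K) {z p : E n} (hp : IsProjection K ((1 / μ) • z) p) (w : E n) :
    |nesterovSmoothing K μ w - nesterovSmoothing K μ z - inner ℝ p (w - z)|
      ≤ 1 / μ * ‖w - z‖ ^ 2 := by
  obtain ⟨q, hq⟩ := exists_isProjection hK ⟨p, hp.1⟩ ((1 / μ) • w)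
  have hlow := le_nesterovSmoothing hμ hp.1 w
  have hup := le_nesterovSmoothing hμ hq.1 z
  have hqp : ‖q - p‖ ≤ 1 / μ * ‖w - z‖ := by
    refine (hq.norm_sub_le hcv hp).trans_eq ?_
    rw [← smul_sub, norm_smul, Real.norm_of_nonneg (by positivity)]
  have hcs := real_inner_le_norm (w - z) (q - p)
  rw [hp.nesterovSmoothing_eq hμ] at hup ⊢
  rw [hq.nesterovSmoothing_eq hμ] at hlow ⊢
  simp only [inner_sub_left, inner_sub_right, real_inner_comm p] at hup hlow hcs ⊢
  rw [abs_of_nonneg (by linarith)]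
  nlinarith [mul_le_mul_of_nonneg_left hqp (norm_nonneg (w - z))]

end SmoothingProjection

lemma nesterovSmoothing_polarSet_le_gauge {n : ℕ} {F : Set (E n)} (h0 : (0 : E n) ∈ interior F)
    {μ : ℝ} (hμ : 0 ≤ μ) (z : E n) : nesterovSmoothing (polarSet F) μ z ≤ gauge F z :=
  nesterovSmoothing_le ⟨0, zero_mem_polarSet F⟩ fun u hu =>
    (sub_le_self _ (by positivity)).trans (inner_le_gauge_of_mem_polarSet h0 hu z)

lemma gauge_le_nesterovSmoothing_polarSet_add {n : ℕ} {F : Set (E n)} (hcl : IsClosed F)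
    (hcv : Convex ℝ F) (h0 : (0 : E n) ∈ F) {μ M : ℝ} (hμ : 0 < μ)
    (hM : ∀ u ∈ polarSet F, ‖u‖ ≤ M) (z : E n) :
    gauge F z ≤ nesterovSmoothing (polarSet F) μ z + μ / 2 * M ^ 2 := by
  refine gauge_le_of_forall_inner_le hcl hcv h0 fun u hu => ?_
  have := le_nesterovSmoothing hμ hu z
  have := pow_le_pow_left₀ (norm_nonneg u) (hM u hu) 2
  nlinarith

theorem nesterov_smoothing_of_gauge_general {n : ℕ} (F : Set (E n))
    (hcl : IsClosed F)
    (hcv : Convex ℝ F) (h0 : (0 : E n) ∈ interior F)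
    (a : E n) (μ : ℝ) (hμ : 0 < μ)
    (φ φμ : E n → ℝ)
    (hφ : φ = fun x => gauge F (x - a))
    (hφμ : φμ = fun x =>
      sSup ((fun u => (inner ℝ (x - a) u : ℝ) - μ / 2 * ‖u‖ ^ 2) '' polarSet F)) :
    (∀ x, φμ x = 1 / (2 * μ) * ‖x - a‖ ^ 2
        - μ / 2 * (Metric.infDist ((1 / μ) • (x - a)) (polarSet F)) ^ 2) ∧
    (∀ x p : E n, IsProjection (polarSet F) ((1 / μ) • (x - a)) p →
        HasGradientAt φμ p x) ∧
    (∀ x, φμ x ≤ φ x ∧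
        φ x ≤ φμ x + μ / 2 * (sSup ((fun u => ‖u‖) '' polarSet F)) ^ 2) := by
  change φμ = fun x => nesterovSmoothing (polarSet F) μ (x - a) at hφμ
  subst hφ hφμ
  have hK : IsCompact (polarSet F) := isCompact_polarSet h0
  have hKne : (polarSet F).Nonempty := ⟨0, zero_mem_polarSet F⟩
  refine ⟨fun x => nesterovSmoothing_eq_sub_infDist hμ hK.isClosed hKne (x - a),
    fun x p hp => ?_, fun x => ⟨nesterovSmoothing_polarSet_le_gauge h0 hμ.le (x - a), ?_⟩⟩
  · refine HasGradientAt.comp_sub_const a (hasGradientAt_of_abs_le_mul_norm_sq (1 / μ) ?_)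
    exact hp.abs_nesterovSmoothing_sub_le hμ hK.isClosed (convex_polarSet F)
  · exact gauge_le_nesterovSmoothing_polarSet_add hcl hcv (interior_subset h0) hμ
      (fun u hu => le_csSup (hK.image continuous_norm).bddAbove ⟨u, hu, rfl⟩) (x - a)

theorem nesterov_smoothing_of_gauge {n : ℕ} (F : Set (E n))
    (hne : F.Nonempty) (hcl : IsClosed F) (hbd : Bornology.IsBounded F)
    (hcv : Convex ℝ F) (h0 : (0 : E n) ∈ interior F)
    (a : E n) (μ : ℝ) (hμ : 0 < μ)
    (φ φμ : E n → ℝ)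
    (hφ : φ = fun x => gauge F (x - a))
    (hφμ : φμ = fun x =>
      sSup ((fun u => (inner ℝ (x - a) u : ℝ) - μ / 2 * ‖u‖ ^ 2) '' polarSet F)) :
    (∀ x, φμ x = 1 / (2 * μ) * ‖x - a‖ ^ 2
        - μ / 2 * (Metric.infDist ((1 / μ) • (x - a)) (polarSet F)) ^ 2) ∧
    (∀ x p : E n, IsProjection (polarSet F) ((1 / μ) • (x - a)) p →
        HasGradientAt φμ p x) ∧
    (∀ x, φμ x ≤ φ x ∧
        φ x ≤ φμ x + μ / 2 * (sSup ((fun u => ‖u‖) '' polarSet F)) ^ 2) :=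
  nesterov_smoothing_of_gauge_general F hcl hcv h0 a μ hμ φ φμ hφ hφμ
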